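/- arXiv:2403.19661 — 7 statements merged into one kernel-verified Lean document; each statement's English description precedes it below -/
import Mathlib

section
/- Let F, G : C → D be functors and α : F ⇒ G a natural transformation. Let r : X → Y be a retraction (split epimorphism) in C and assume the component α_X is an epimorphism in D. Then the naturality square F(r) ; α_Y = α_X ; G(r) is a pushout square in D. -/
open CategoryTheory

universe v₁ v₂ u₁ u₂

/-- If `r : X ⟶ Y` is a retraction (split epimorphism) and the component `α.app X` is an
epimorphism, then the naturality square of `α` at `r` is a pushout. -/
theorem statement2 {C : Type u₁} [Category.{v₁} C] {D : Type u₂} [Category.{v₂} D]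
    {F G : C ⥤ D} (α : F ⟶ G) {X Y : C} (r : X ⟶ Y)
    (hr : IsSplitEpi r) (hα : Epi (α.app X)) :
    IsPushout (F.map r) (α.app X) (α.app Y) (G.map r) := by
  obtain ⟨s, hs⟩ := hr.exists_splitEpi
  have comm : CommSq (F.map r) (α.app X) (α.app Y) (G.map r) := ⟨α.naturality r⟩
  refine IsPushout.of_isColimit' comm (Limits.PushoutCocone.IsColimit.mk _
    (fun c => G.map s ≫ c.inr) (fun c => ?_) (fun c => ?_) (fun c m h1 h2 => ?_))
  · show α.app Y ≫ G.map s ≫ c.inr = c.inl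
    calc α.app Y ≫ G.map s ≫ c.inr
        = F.map s ≫ α.app X ≫ c.inr := by rw [← α.naturality_assoc s]
      _ = F.map s ≫ F.map r ≫ c.inl := by rw [← c.condition]
      _ = c.inl := by rw [← Functor.map_comp_assoc, hs, F.map_id, Category.id_comp]
  · show G.map r ≫ G.map s ≫ c.inr = c.inr
    refine (cancel_epi (α.app X)).mp ?_
    calc α.app X ≫ G.map r ≫ G.map s ≫ c.inr
        = F.map r ≫ α.app Y ≫ G.map s ≫ c.inr := (α.naturality_assoc r _).symm
      _ = F.map r ≫ F.map s ≫ α.app X ≫ c.inr := by rw [← α.naturality_assoc s]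
      _ = F.map r ≫ F.map s ≫ F.map r ≫ c.inl := by rw [← c.condition]
      _ = F.map r ≫ c.inl := by
            rw [show F.map s ≫ F.map r ≫ c.inl = c.inl by
              rw [← Functor.map_comp_assoc, hs, F.map_id, Category.id_comp]]
      _ = α.app X ≫ c.inr := c.condition
  · show m = G.map s ≫ c.inr
    rw [← h2, ← Category.assoc, ← G.map_comp, hs, G.map_id, Category.id_comp]
end

section
/- In a locally λ-presentable category 𝒜, the class of all monomorphisms equals the right orthogonal complement r(Ret_λ), where Ret_λ is the class of retractions between λ-presentable objects. -/
open CategoryTheory CategoryTheory.Limits Opposite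

universe w v u

namespace Paper

variable {C : Type u} [Category.{v} C]

/-- A category is `κ`-filtered if every diagram with fewer than `κ` many morphisms
admits a cocone. -/
def IsCardinalFiltered (κ : Cardinal.{v}) (J : Type v) [Category.{v} J] : Prop :=
  ∀ (K : Type v) [Category.{v} K],
    Cardinal.mk (Σ (a : K) (b : K), a ⟶ b) < κ → ∀ F : K ⥤ J, Nonempty (Limits.Cocone F)

/-- An object `X` is `κ`-presentable if its hom-functor `Hom(X, -)` preserves
`κ`-filtered colimits. -/
def IsPresentableObj (κ : Cardinal.{v}) (X : C) : Prop :=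
  ∀ (J : Type v) [Category.{v} J], IsCardinalFiltered κ J →
    Nonempty (PreservesColimitsOfShape J (coyoneda.obj (op X)))

/-- A category is locally `κ`-presentable if it is cocomplete and has a small family of
`κ`-presentable objects such that every object is a `κ`-filtered colimit of objects
from this family. -/
def LocallyPresentable (κ : Cardinal.{v}) (C : Type u) [Category.{v} C] : Prop :=
  HasColimits C ∧
    ∃ S : Set C, Small.{v} S ∧ (∀ X ∈ S, IsPresentableObj κ X) ∧
      ∀ X : C, ∃ (J : Type v) (_ : Category.{v} J) (F : J ⥤ C) (c : Limits.Cocone F),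
        IsCardinalFiltered κ J ∧ Nonempty (Limits.IsColimit c) ∧ c.pt = X ∧
          ∀ j, F.obj j ∈ S

lemma isFiltered_of_isCardinalFiltered {κ : Cardinal.{v}} (hreg : κ.IsRegular)
    {J : Type v} [Category.{v} J] (hJ : IsCardinalFiltered κ J) : IsFiltered J := by
  apply IsFiltered.of_cocone_nonempty.{v}
  intro K _ _ F
  refine hJ K ?_ F
  have h1 : ∀ a b : K, Finite (a ⟶ b) := fun a b => Finite.of_fintype _
  have : Finite (Σ (a : K) (b : K), a ⟶ b) := by infer_instance
  exact lt_of_lt_of_le (Cardinal.lt_aleph0_of_finite _) hreg.aleph0_le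

lemma presentable_coprod {κ : Cardinal.{v}} (hreg : κ.IsRegular) [HasColimits C]
    {A B : C} (hA : IsPresentableObj κ A) (hB : IsPresentableObj κ B) :
    IsPresentableObj κ (A ⨿ B) := by
  intro J _ hJ
  have hfil : IsFiltered J := isFiltered_of_isCardinalFiltered hreg hJ
  haveI pA := (hA J hJ).some
  haveI pB := (hB J hJ).some
  refine ⟨⟨fun {F} => ⟨fun {c} hc => ⟨?_⟩⟩⟩⟩
  have hcA : IsColimit ((coyoneda.obj (op A)).mapCocone c) := isColimitOfPreserves _ hc
  have hcB : IsColimit ((coyoneda.obj (op B)).mapCocone c) := isColimitOfPreserves _ hc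
  apply Types.FilteredColimit.isColimitOf
  · intro x
    obtain ⟨j1, a, ha⟩ := Types.jointly_surjective _ hcA (coprod.inl ≫ x)
    obtain ⟨j2, b, hb⟩ := Types.jointly_surjective _ hcB (coprod.inr ≫ x)
    refine ⟨IsFiltered.max j1 j2,
      coprod.desc (a ≫ F.map (IsFiltered.leftToMax j1 j2))
        (b ≫ F.map (IsFiltered.rightToMax j1 j2)), ?_⟩
    show x = _ ≫ c.ι.app _
    apply coprod.hom_ext
    · simp only [coprod.inl_desc_assoc, Category.assoc, c.w]
      exact ha.symm
    · simp only [coprod.inr_desc_assoc, Category.assoc, c.w]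
      exact hb.symm
  · intro i j xi xj h
    have h1 : ((coyoneda.obj (op A)).mapCocone c).ι.app i (coprod.inl ≫ xi) =
        ((coyoneda.obj (op A)).mapCocone c).ι.app j (coprod.inl ≫ xj) := by
      show (coprod.inl ≫ xi) ≫ c.ι.app i = (coprod.inl ≫ xj) ≫ c.ι.app j
      have : xi ≫ c.ι.app i = xj ≫ c.ι.app j := h
      simp only [Category.assoc, this]
    have h2 : ((coyoneda.obj (op B)).mapCocone c).ι.app i (coprod.inr ≫ xi) =
        ((coyoneda.obj (op B)).mapCocone c).ι.app j (coprod.inr ≫ xj) := by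
      show (coprod.inr ≫ xi) ≫ c.ι.app i = (coprod.inr ≫ xj) ≫ c.ι.app j
      have : xi ≫ c.ι.app i = xj ≫ c.ι.app j := h
      simp only [Category.assoc, this]
    obtain ⟨k1, f1, g1, hk1⟩ :=
      (Types.FilteredColimit.isColimit_eq_iff _ hcA).mp h1
    obtain ⟨k2, f2, g2, hk2⟩ :=
      (Types.FilteredColimit.isColimit_eq_iff _ hcB).mp h2
    have e1 : (coprod.inl ≫ xi) ≫ F.map f1 = (coprod.inl ≫ xj) ≫ F.map g1 := hk1
    have e2 : (coprod.inr ≫ xi) ≫ F.map f2 = (coprod.inr ≫ xj) ≫ F.map g2 := hk2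
    set u := IsFiltered.leftToMax k1 k2
    set v2 := IsFiltered.rightToMax k1 k2
    set w1 := IsFiltered.coeqHom (f1 ≫ u) (f2 ≫ v2)
    have cond1 := IsFiltered.coeq_condition (f1 ≫ u) (f2 ≫ v2)
    set w2 := IsFiltered.coeqHom (g1 ≫ u ≫ w1) (g2 ≫ v2 ≫ w1)
    have cond2 := IsFiltered.coeq_condition (g1 ≫ u ≫ w1) (g2 ≫ v2 ≫ w1)
    refine ⟨_, f1 ≫ u ≫ w1 ≫ w2, g1 ≫ u ≫ w1 ≫ w2, ?_⟩
    show xi ≫ F.map (f1 ≫ u ≫ w1 ≫ w2) = xj ≫ F.map (g1 ≫ u ≫ w1 ≫ w2)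
    have hf : f1 ≫ u ≫ w1 ≫ w2 = f2 ≫ v2 ≫ w1 ≫ w2 := by
      simpa only [Category.assoc] using cond1 =≫ w2
    have hg : g1 ≫ u ≫ w1 ≫ w2 = g2 ≫ v2 ≫ w1 ≫ w2 := by
      simpa only [Category.assoc] using cond2
    apply coprod.hom_ext
    · simpa only [Category.assoc, ← F.map_comp] using e1 =≫ F.map (u ≫ w1 ≫ w2)
    · rw [hf, hg]
      simpa only [Category.assoc, ← F.map_comp] using e2 =≫ F.map (v2 ≫ w1 ≫ w2)

/-- `e ⊥ m`: every commutative square from `e` to `m` has a unique diagonal filler. -/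
def UniqueLift {A B X Y : C} (e : A ⟶ B) (m : X ⟶ Y) : Prop :=
  ∀ (u : A ⟶ X) (v : B ⟶ Y), u ≫ m = e ≫ v →
    ∃! d : B ⟶ X, e ≫ d = u ∧ d ≫ m = v

/-- `p : X ⟶ Y` is a `κ`-local retraction if every morphism from a `κ`-presentable object
into `Y` lifts along `p`. -/
def IsLocalRetraction (κ : Cardinal.{v}) {X Y : C} (p : X ⟶ Y) : Prop :=
  ∀ (Γ : C), IsPresentableObj κ Γ → ∀ f : Γ ⟶ Y, ∃ g : Γ ⟶ X, g ≫ p = f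

/-- In a locally `κ`-presentable category, a morphism is a monomorphism iff it lies in
the right orthogonal complement of the class of retractions between `κ`-presentable
objects. -/
theorem statement7 {C : Type u} [Category.{v} C] (κ : Cardinal.{v})
    (hreg : κ.IsRegular) (hC : LocallyPresentable κ C) {X Y : C} (m : X ⟶ Y) :
    Mono m ↔
      ∀ {A B : C} (e : A ⟶ B), IsSplitEpi e →
        IsPresentableObj κ A → IsPresentableObj κ B → UniqueLift e m := by
  obtain ⟨hcolim, S, hSsmall, hSpres, hSdecomp⟩ := hC
  haveI := hcolim
  constructor
  · intro hm A B e he _ _ u v huv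
    have s := he.exists_splitEpi.some
    have hse : s.section_ ≫ e = 𝟙 B := s.id
    refine ⟨s.section_ ≫ u, ⟨?_, ?_⟩, ?_⟩
    · have : (e ≫ s.section_ ≫ u) ≫ m = u ≫ m := by
        rw [Category.assoc, Category.assoc, huv, ← Category.assoc, ← Category.assoc,
          Category.assoc e, hse, Category.comp_id]
      exact (cancel_mono m).mp this
    · rw [Category.assoc, huv, ← Category.assoc, hse, Category.id_comp]
    · rintro d ⟨hd1, hd2⟩
      apply (cancel_mono m).mp
      rw [hd2, Category.assoc, huv, ← Category.assoc, hse, Category.id_comp]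
  · intro H
    refine ⟨fun {Z} f g hfg => ?_⟩
    obtain ⟨J, instJ, F, c, hJfil, ⟨hc⟩, hpt, hmem⟩ := hSdecomp Z
    subst hpt
    apply hc.hom_ext
    intro j
    have hΓ : IsPresentableObj κ (F.obj j) := hSpres _ (hmem j)
    have hΓΓ : IsPresentableObj κ (F.obj j ⨿ F.obj j) := presentable_coprod hreg hΓ hΓ
    set a := c.ι.app j ≫ f with ha
    set b := c.ι.app j ≫ g with hb
    have hab : a ≫ m = b ≫ m := by
      rw [ha, hb, Category.assoc, Category.assoc, hfg]
    have he : IsSplitEpi (coprod.desc (𝟙 (F.obj j)) (𝟙 (F.obj j))) :=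
      ⟨⟨⟨coprod.inl, coprod.inl_desc _ _⟩⟩⟩
    obtain ⟨d, ⟨hd1, hd2⟩, -⟩ :=
      H (coprod.desc (𝟙 (F.obj j)) (𝟙 (F.obj j))) he hΓΓ hΓ (coprod.desc a b) (a ≫ m)
        (by apply coprod.hom_ext <;> simp [hab])
    have h1 : d = a := by
      have := coprod.inl ≫= hd1
      calc d = coprod.inl ≫ coprod.desc d d := (coprod.inl_desc d d).symm
        _ = coprod.inl ≫ coprod.desc a b := by simpa using this
        _ = a := coprod.inl_desc a b
    have h2 : d = b := by
      have := coprod.inr ≫= hd1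
      calc d = coprod.inr ≫ coprod.desc d d := (coprod.inr_desc d d).symm
        _ = coprod.inr ≫ coprod.desc a b := by simpa using this
        _ = b := coprod.inr_desc a b
    show a = b
    rw [← h1, ← h2]

end Paper
end

section
/- Let 𝒜 be a replete full subcategory of a locally small category ℬ with products, and E a class of epimorphisms in ℬ such that for every object B ∈ ℬ the class of E-morphisms out of B with codomain in 𝒜 is essentially small. Then 𝒜 ⊆ ℬ is E-reflective (the inclusion has a left adjoint whose unit components lie in E) if and only if 𝒜 is closed under products in ℬ and every morphism f : B → A with A ∈ 𝒜 factors through some morphism e : B → A' in E with A' ∈ 𝒜. -/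
open CategoryTheory CategoryTheory.Limits

universe v u

/-- Let `A` be a replete full subcategory (given by a set of objects closed under
isomorphisms) of a locally small category `B` with products, and `E` a class of
epimorphisms such that for each object the `E`-quotients landing in `A` are essentially
small.  Then `A` is `E`-reflective (every object has a reflection into `A` with unit in
`E`) iff `A` is closed under products and every morphism into an object of `A` factors
through an `E`-morphism with codomain in `A`. -/
theorem statement9 {B : Type u} [Category.{v} B] [HasProducts.{v} B]
    (A : Set B) (hrep : ∀ {X Y : B}, (X ≅ Y) → X ∈ A → Y ∈ A)
    (E : MorphismProperty B) (hE : ∀ {X Y : B} (f : X ⟶ Y), E f → Epi f)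
    (hsmall : ∀ X : B, ∃ (ι : Type v) (Y : ι → B) (q : ∀ i, X ⟶ Y i),
      (∀ i, E (q i) ∧ Y i ∈ A) ∧
        ∀ {Z : B} (f : X ⟶ Z), E f → Z ∈ A →
          ∃ (i : ι) (e : Y i ≅ Z), q i ≫ e.hom = f) :
    (∀ X : B, ∃ (rX : B) (η : X ⟶ rX), rX ∈ A ∧ E η ∧
        ∀ {Z : B} (f : X ⟶ Z), Z ∈ A → ∃! g : rX ⟶ Z, η ≫ g = f) ↔
      ((∀ (ι : Type v) (X : ι → B), (∀ i, X i ∈ A) → (∏ᶜ X) ∈ A) ∧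
        ∀ {X Z : B} (f : X ⟶ Z), Z ∈ A →
          ∃ (A' : B) (e : X ⟶ A'), A' ∈ A ∧ E e ∧ ∃ g : A' ⟶ Z, e ≫ g = f) := by
  constructor
  · intro h
    constructor
    · intro ι X hX
      obtain ⟨rP, η, hrA, hηE, huniv⟩ := h (∏ᶜ X)
      choose g hg using fun i => (huniv (Pi.π X i) (hX i)).exists
      have hepi : Epi η := hE η hηE
      have hs : η ≫ Pi.lift g = 𝟙 _ := by
        ext i
        simp [hg]
      have hsi : Pi.lift g ≫ η = 𝟙 _ := by
        rw [← cancel_epi η, ← Category.assoc, hs, Category.id_comp, Category.comp_id]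
      exact hrep ⟨Pi.lift g, η, hsi, hs⟩ hrA
    · intro X Z f hZ
      obtain ⟨rX, η, hrA, hηE, huniv⟩ := h X
      obtain ⟨g, hg, -⟩ := huniv f hZ
      exact ⟨rX, η, hrA, hηE, g, hg⟩
  · rintro ⟨hprod, hfact⟩ X
    obtain ⟨ι, Y, q, hq, hcover⟩ := hsmall X
    have hP : (∏ᶜ Y) ∈ A := hprod ι Y (fun i => (hq i).2)
    obtain ⟨A', e, hA', heE, g, hg⟩ := hfact (Pi.lift q) hP
    refine ⟨A', e, hA', heE, ?_⟩
    intro Z f hZ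
    obtain ⟨A'', e', hA'', he'E, h', hh'⟩ := hfact f hZ
    obtain ⟨i, φ, hφ⟩ := hcover e' he'E hA''
    have hepi : Epi e := hE e heE
    refine ⟨g ≫ Pi.π Y i ≫ φ.hom ≫ h', ?_, ?_⟩
    · have h1 : e ≫ g ≫ Pi.π Y i = q i := by rw [← Category.assoc, hg]; simp
      calc e ≫ g ≫ Pi.π Y i ≫ φ.hom ≫ h'
          = (e ≫ g ≫ Pi.π Y i) ≫ φ.hom ≫ h' := by simp
        _ = (q i ≫ φ.hom) ≫ h' := by rw [h1]; simp
        _ = f := by rw [hφ, hh']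
    · intro y hy
      rw [← cancel_epi e, hy]
      symm
      have h1 : e ≫ g ≫ Pi.π Y i = q i := by rw [← Category.assoc, hg]; simp
      calc e ≫ g ≫ Pi.π Y i ≫ φ.hom ≫ h'
          = (e ≫ g ≫ Pi.π Y i) ≫ φ.hom ≫ h' := by simp
        _ = (q i ≫ φ.hom) ≫ h' := by rw [h1]; simp
        _ = f := by rw [hφ, hh']
end

section
/- Let 𝒞 be a category with λ-filtered colimits and let Λ be a class of epimorphisms in 𝒞 each of whose domains is a λ-presentable object. Then the full subcategory Λ^⊥ of objects orthogonal to every morphism in Λ is closed under λ-filtered colimits in 𝒞. -/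
open CategoryTheory CategoryTheory.Limits Opposite

universe w v u

namespace Paper

variable {C : Type u} [Category.{v} C]

/-- An object `X` is orthogonal to `f` if every morphism from the domain of `f` to `X`
factors uniquely through `f`. -/
def Orthogonal (X : C) {A B : C} (f : A ⟶ B) : Prop :=
  ∀ u : A ⟶ X, ∃! v : B ⟶ X, f ≫ v = u

/-- If `C` has `κ`-filtered colimits and `Λ` is a class of epimorphisms with
`κ`-presentable domains, then the orthogonality class `Λ^⊥` is closed under `κ`-filtered
colimits. -/
theorem statement10 {C : Type u} [Category.{v} C] (κ : Cardinal.{v}) (hreg : κ.IsRegular)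
    (hfc : ∀ (J : Type v) [Category.{v} J], IsCardinalFiltered κ J → HasColimitsOfShape J C)
    {ι : Type w} {A B : ι → C} (g : ∀ i, A i ⟶ B i)
    (hepi : ∀ i, Epi (g i)) (hpres : ∀ i, IsPresentableObj κ (A i))
    (J : Type v) [Category.{v} J] (hJ : IsCardinalFiltered κ J)
    (D : J ⥤ C) (c : Limits.Cocone D) (hc : Limits.IsColimit c)
    (horth : ∀ (j : J) (i : ι), Orthogonal (D.obj j) (g i)) :
    ∀ i : ι, Orthogonal c.pt (g i) := by
  intro i u
  obtain ⟨P⟩ := hpres i J hJ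
  have hmap : Limits.IsColimit ((coyoneda.obj (op (A i))).mapCocone c) :=
    isColimitOfPreserves (coyoneda.obj (op (A i))) hc
  obtain ⟨j, f, hf⟩ := Limits.Types.jointly_surjective _ hmap u
  obtain ⟨v', hv', _⟩ := horth j i f
  simp only [Functor.mapCocone_ι_app, Functor.flip_obj_obj, Functor.flip_obj_map, yoneda_obj_obj, yoneda_map_app] at hf
  refine ⟨v' ≫ c.ι.app j, ?_, ?_⟩
  · show g i ≫ v' ≫ c.ι.app j = u
    rw [← Category.assoc, hv']; exact hf
  · intro y hy
    have := hepi i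
    apply (cancel_epi (g i)).mp
    rw [hy, ← Category.assoc, hv']; exact hf.symm

end Paper
end

section
/- Let p = colim_{I ∈ 𝕀} p_I be a λ-filtered colimit in the arrow category 𝒜^→ such that each p_I is a λ-local retraction in 𝒜. Then p is a λ-local retraction in 𝒜. -/
open CategoryTheory CategoryTheory.Limits Opposite

universe w v u

namespace Paper

variable {C : Type u} [Category.{v} C]

/-- A `κ`-filtered colimit in the arrow category of `κ`-local retractions is a
`κ`-local retraction. -/
theorem statement14 {C : Type u} [Category.{v} C] (κ : Cardinal.{v})
    (J : Type v) [Category.{v} J] (hJ : IsCardinalFiltered κ J)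
    (D : J ⥤ Arrow C) (c : Limits.Cocone D) (hc : Limits.IsColimit c)
    (h : ∀ j : J, IsLocalRetraction κ (D.obj j).hom) :
    IsLocalRetraction κ c.pt.hom := by
  intro Γ hΓ f
  let K : Cocone (D ⋙ Arrow.rightFunc) → Cocone D := fun s =>
    { pt := Arrow.mk (𝟙 s.pt)
      ι :=
        { app := fun j =>
            { left := (D.obj j).hom ≫ s.ι.app j
              right := s.ι.app j
              w := by simp; rfl }
          naturality := fun j₁ j₂ t => by
            have hs : (D.map t).right ≫ s.ι.app j₂ = s.ι.app j₁ := by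
              have hn := s.ι.naturality t
              simp at hn
              exact hn
            ext
            · show (D.map t).left ≫ (D.obj j₂).hom ≫ s.ι.app j₂ =
                ((D.obj j₁).hom ≫ s.ι.app j₁) ≫ 𝟙 _
              erw [← Category.assoc, Arrow.w (D.map t)]
              simp [hs]
              erw [Category.assoc, hs]
            · show (D.map t).right ≫ s.ι.app j₂ = s.ι.app j₁ ≫ 𝟙 _
              simp [hs]; rfl } }
  have hright : IsColimit (Arrow.rightFunc.mapCocone c) :=
    { desc := fun s => (hc.desc (K s)).right
      fac := fun s j => by
        exact congrArg CommaMorphism.right (hc.fac (K s) j)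
      uniq := fun s m hm => by
        have key : ({ left := c.pt.hom ≫ m, right := m, w := by simp; rfl } :
            c.pt ⟶ Arrow.mk (𝟙 s.pt)) = hc.desc (K s) := by
          apply hc.uniq (K s)
          intro j
          ext
          · show (c.ι.app j).left ≫ c.pt.hom ≫ m = (D.obj j).hom ≫ s.ι.app j
            erw [← Category.assoc]
            have hw : (c.ι.app j).left ≫ c.pt.hom = (D.obj j).hom ≫ (c.ι.app j).right := by
              simpa using Arrow.w (c.ι.app j)
            erw [hw, Category.assoc]
            erw [show (c.ι.app j).right ≫ m = s.ι.app j from hm j]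
          · show (c.ι.app j).right ≫ m = s.ι.app j
            exact hm j
        exact congrArg CommaMorphism.right key }
  obtain ⟨P⟩ := hΓ J hJ
  have hty : IsColimit ((coyoneda.obj (op Γ)).mapCocone (Arrow.rightFunc.mapCocone c)) :=
    isColimitOfPreserves _ hright
  obtain ⟨j, f', hf'⟩ := Types.jointly_surjective _ hty f
  obtain ⟨g', hg'⟩ := h j Γ hΓ f'
  refine ⟨g' ≫ (c.ι.app j).left, ?_⟩
  have hw : (c.ι.app j).left ≫ c.pt.hom = (D.obj j).hom ≫ (c.ι.app j).right := by
    simpa using Arrow.w (c.ι.app j)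
  rw [Category.assoc, hw, ← Category.assoc, hg']
  exact hf'

end Paper
end

section
/- In a locally λ-presentable category, every λ-local retraction is a regular epimorphism: it is the coequalizer of its kernel pair. -/
open CategoryTheory CategoryTheory.Limits Opposite

universe w v u

namespace Paper

variable {C : Type u} [Category.{v} C]

/-- In a locally `κ`-presentable category, every `κ`-local retraction is a regular
epimorphism: it is the coequalizer of its kernel pair. -/
theorem statement16 {C : Type u} [Category.{v} C] (κ : Cardinal.{v}) (hreg : κ.IsRegular)
    (hC : LocallyPresentable κ C) {X Y : C} (p : X ⟶ Y)
    (hp : IsLocalRetraction κ p)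
    {Z : C} {a b : Z ⟶ X} (hk : IsKernelPair p a b) :
    Nonempty (Limits.IsColimit (Limits.Cofork.ofπ p hk.w)) := by
  obtain ⟨_, S, _, hSpres, hSgen⟩ := hC
  obtain ⟨J, instJ, F, c, hJfilt, ⟨hcY⟩, hcpt, hFS⟩ := hSgen Y
  subst hcpt
  -- key: two lifts of the same map agree after composing with any coequalizing map
  have key : ∀ {Γ : C} (u v : Γ ⟶ X), u ≫ p = v ≫ p →
      ∀ {W : C} (q : X ⟶ W), a ≫ q = b ≫ q → u ≫ q = v ≫ q := by
    intro Γ u v huv W q hq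
    have h1 := hk.lift_fst u v huv
    have h2 := hk.lift_snd u v huv
    calc u ≫ q = hk.lift u v huv ≫ a ≫ q := by rw [← Category.assoc, h1]
      _ = hk.lift u v huv ≫ b ≫ q := by rw [hq]
      _ = v ≫ q := by rw [← Category.assoc, h2]
  obtain ⟨JX, instJX, FX, cX, hJXfilt, ⟨hcX⟩, hcptX, hFSX⟩ := hSgen X
  subst hcptX
  -- lift each cocone leg along p
  choose g hg using fun j => hp (F.obj j) (hSpres _ (hFS j)) (c.ι.app j)
  refine ⟨Cofork.IsColimit.mk' _ fun s => ?_⟩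
  have hcond : a ≫ s.π = b ≫ s.π := s.condition
  -- cocone on F with vertex s.pt
  have hnat : ∀ {j j' : J} (φ : j ⟶ j'), F.map φ ≫ g j' ≫ s.π = g j ≫ s.π := by
    intro j j' φ
    rw [← Category.assoc]
    refine key (F.map φ ≫ g j') (g j) ?_ s.π hcond
    rw [Category.assoc, hg, hg, c.w]
  let coc : Cocone F :=
    { pt := s.pt
      ι := { app := fun j => g j ≫ s.π
             naturality := by intro j j' φ; simp [hnat φ] } }
  refine ⟨hcY.desc coc, ?_, ?_⟩
  · -- p ≫ desc = s.π, test against cocone for X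
    show p ≫ hcY.desc coc = s.π
    refine hcX.hom_ext fun jx => ?_
    set x := cX.ι.app jx with hx
    obtain ⟨pres⟩ := hSpres _ (hFSX jx) J hJfilt
    obtain ⟨j, y, hy⟩ := Types.jointly_surjective (F ⋙ coyoneda.obj (op (FX.obj jx)))
      (isColimitOfPreserves (coyoneda.obj (op (FX.obj jx))) hcY) (x ≫ p)
    have hy' : y ≫ c.ι.app j = x ≫ p := hy
    show x ≫ p ≫ hcY.desc coc = x ≫ s.π
    calc x ≫ p ≫ hcY.desc coc = (x ≫ p) ≫ hcY.desc coc := by rw [Category.assoc]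
      _ = y ≫ c.ι.app j ≫ hcY.desc coc := by rw [← hy', Category.assoc]
      _ = y ≫ g j ≫ s.π := by rw [hcY.fac coc j]
      _ = (y ≫ g j) ≫ s.π := by rw [Category.assoc]
      _ = x ≫ s.π := by
          refine key (y ≫ g j) x ?_ s.π hcond
          rw [Category.assoc, hg, hy']
  · intro m hm
    refine hcY.hom_ext fun j => ?_
    rw [hcY.fac coc j]
    have : c.ι.app j ≫ m = g j ≫ p ≫ m := by rw [← Category.assoc, hg]
    rw [this]
    rw [show p ≫ m = s.π from hm]


end Paper
end

section
/- Let 𝒞 be a category that satisfies the ascending chain condition (every ω-chain X_0 → X_1 → ⋯ in 𝒞 is eventually strongly connected). Then for every nonempty diagram D : 𝕀 → 𝒞 there exists an object I_0 ∈ 𝕀 such that for every morphism I_0 → I in 𝕀, the objects D(I_0) and D(I) are strongly connected in 𝒞. -/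
open CategoryTheory

universe w' w v u

/-- Two objects are strongly connected if there are morphisms in both directions. -/
def StronglyConnected {C : Type u} [Category.{v} C] (X Y : C) : Prop :=
  Nonempty (X ⟶ Y) ∧ Nonempty (Y ⟶ X)

/-- A category satisfies the ascending chain condition if every ω-chain is eventually
pairwise strongly connected. -/
def SatisfiesACC (C : Type u) [Category.{v} C] : Prop :=
  ∀ X : ℕ → C, (∀ n, Nonempty (X n ⟶ X (n + 1))) →
    ∃ N : ℕ, ∀ m n, N ≤ m → N ≤ n → StronglyConnected (X m) (X n)

/-- If `C` satisfies ACC then every nonempty diagram `D : I ⥤ C` has an object `I₀`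
such that for every morphism `I₀ ⟶ I`, `D I₀` and `D I` are strongly connected. -/
theorem statement18 {C : Type u} [Category.{v} C] (hC : SatisfiesACC C)
    {I : Type w} [Category.{w'} I] [Nonempty I] (D : I ⥤ C) :
    ∃ I₀ : I, ∀ {I' : I}, (I₀ ⟶ I') → StronglyConnected (D.obj I₀) (D.obj I') := by
  by_contra h
  push_neg at h
  have h' : ∀ i₀ : I, ∃ i' : I, Nonempty (i₀ ⟶ i') ∧
      ¬ StronglyConnected (D.obj i₀) (D.obj i') := by
    intro i₀
    obtain ⟨i', f, hf⟩ := h i₀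
    exact ⟨i', ⟨f⟩, hf⟩
  choose g hg hbad using h'
  let i : ℕ → I := fun n => Nat.recAux (Classical.arbitrary I) (fun _ x => g x) n
  have hstep : ∀ n, i (n + 1) = g (i n) := fun n => rfl
  obtain ⟨N, hN⟩ := hC (fun n => D.obj (i n)) (by
    intro n
    obtain ⟨f⟩ := hg (i n)
    exact ⟨D.map (hstep n ▸ f)⟩)
  exact hbad (i N) (by simpa [hstep] using hN N (N + 1) le_rfl (by omega))
end
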